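/- Let E be countable with an irreducible recurrent Markov chain (locally finite transitions), x₀ ∈ E, and suppose φ : E → ℝ satisfies: ℙ_x(X_k = x₀) → 0 as k → ∞ for every x, and Σ_{k=0}^{N}[ℙ_{x₀}(X_k = x₀) − ℙ_x(X_k = x₀)] → φ(x) as N → ∞ for every x. Then φ(x₀) = 0 and φ is harmonic at every x ≠ x₀, i.e. Σ_y p_{x,y} φ(y) = φ(x) for x ≠ x₀. -/

import Mathlib

/-!
Write `u_y(k) = ℙ_y(X_k = x₀)`. Summing the cylinder law over the countably many paths and
splitting off the first step gives `u_x(k + 1) = Σ_y p_{x,y} u_y(k)`, a finite sum. For `x ≠ x₀`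
we also have `u_x(0) = 0`, so by telescoping
`Σ_y p_{x,y} Σ_{k ≤ N} (u_{x₀}(k) - u_y(k)) = Σ_{k ≤ N} (u_{x₀}(k) - u_x(k)) - u_x(N + 1)`,
and letting `N → ∞` (with `u_x(N + 1) → 0`) gives `Σ_y p_{x,y} φ(y) = φ(x)`.
At `x₀` every partial sum vanishes, so `φ(x₀) = 0`.
-/

open MeasureTheory Filter Topology

noncomputable def pathWeight {E : Type*} (p : E → E → ℝ) {n : ℕ} (v : Fin (n + 1) → E) :
    ENNReal :=
  ∏ i : Fin n, ENNReal.ofReal (p (v i.castSucc) (v i.succ))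

theorem pathWeight_cons {E : Type*} (p : E → E → ℝ) {n : ℕ} (y : E) (w : Fin (n + 1) → E) :
    pathWeight p (Fin.cons y w : Fin (n + 2) → E)
      = ENNReal.ofReal (p y (w 0)) * pathWeight p w := by
  simp [pathWeight, Fin.prod_univ_succ]

def HasPathLaw {E Ω : Type*} [DecidableEq E] [MeasurableSpace Ω] (X : ℕ → Ω → E)
    (ℙ : E → Measure Ω) (p : E → E → ℝ) : Prop :=
  ∀ (x : E) (n : ℕ) (s : ℕ → E),
    (ℙ x) {ω | ∀ i ≤ n, X i ω = s i}
      = (if s 0 = x then 1 else 0) * ∏ i ∈ Finset.range n, ENNReal.ofReal (p (s i) (s (i + 1)))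

section

variable {E Ω : Type*} [DecidableEq E] [MeasurableSpace Ω] {X : ℕ → Ω → E}

theorem measure_eq_tsum_paths [MeasurableSpace E] [Countable E] [MeasurableSingletonClass E]
    (hX : ∀ n, Measurable (X n)) (μ : Measure Ω) (n : ℕ) (z : E) :
    μ {ω | X n ω = z} = ∑' v : Fin (n + 1) → E,
      if v (Fin.last n) = z then μ {ω | ∀ i : Fin (n + 1), X i ω = v i} else 0 := by
  have hpath : Measurable fun ω (i : Fin (n + 1)) => X i ω := measurable_pi_lambda _ fun i => hX i
  have hlast : MeasurableSet {v : Fin (n + 1) → E | v (Fin.last n) = z} :=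
    measurableSet_eq_fun (measurable_pi_apply _) measurable_const
  calc μ {ω | X n ω = z}
      = μ.map (fun ω (i : Fin (n + 1)) => X i ω) {v | v (Fin.last n) = z} := by
        rw [Measure.map_apply hpath hlast]; rfl
    _ = _ := (Measure.tsum_indicator_apply_singleton _ _ hlast).symm
    _ = _ := by
        refine tsum_congr fun v => ?_
        simp only [Set.indicator_apply, Set.mem_ofPred_eq,
          Measure.map_apply hpath (measurableSet_singleton v)]
        congr 2
        ext ω
        simp [funext_iff]

variable {ℙ : E → Measure Ω} {p : E → E → ℝ}

theorem HasPathLaw.measure_path (h : HasPathLaw X ℙ p) (x : E) {n : ℕ} (v : Fin (n + 1) → E) :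
    ℙ x {ω | ∀ i : Fin (n + 1), X i ω = v i} = (if v 0 = x then 1 else 0) * pathWeight p v := by
  have hclamp : ∀ i : Fin (n + 1), Fin.clamp i n = i := fun i =>
    Fin.ext (by simp [Nat.le_of_lt_succ i.isLt])
  have hcyl : {ω | ∀ i : Fin (n + 1), X i ω = v i}
      = {ω | ∀ i ≤ n, X i ω = v (Fin.clamp i n)} := by
    ext ω
    refine ⟨fun hω i hi => ?_, fun hω i => ?_⟩
    · simpa [hclamp ⟨i, Nat.lt_succ_of_le hi⟩] using hω ⟨i, Nat.lt_succ_of_le hi⟩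
    · simpa [hclamp i] using hω i (Nat.le_of_lt_succ i.isLt)
  rw [hcyl, h x n, pathWeight, ← Fin.prod_univ_eq_prod_range]
  have hclamp0 : Fin.clamp 0 n = 0 := hclamp 0
  have hclampCastSucc : ∀ i : Fin n, Fin.clamp i n = i.castSucc := fun i => hclamp i.castSucc
  have hclampSucc : ∀ i : Fin n, Fin.clamp (i + 1) n = i.succ := fun i => hclamp i.succ
  simp only [hclamp0, hclampCastSucc, hclampSucc]

theorem HasPathLaw.measure_zero_of_ne (h : HasPathLaw X ℙ p) {x z : E} (hzx : z ≠ x) :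
    ℙ x {ω | X 0 ω = z} = 0 := by
  simpa [hzx] using h x 0 fun _ => z

variable [MeasurableSpace E] [Countable E] [MeasurableSingletonClass E]

theorem HasPathLaw.measure_succ (h : HasPathLaw X ℙ p) (hX : ∀ n, Measurable (X n))
    (x z : E) (n : ℕ) :
    ℙ x {ω | X (n + 1) ω = z} = ∑' y, ENNReal.ofReal (p x y) * ℙ y {ω | X n ω = z} := by
  calc ℙ x {ω | X (n + 1) ω = z}
      = ∑' v : Fin (n + 2) → E,
          if v (Fin.last (n + 1)) = z then (if v 0 = x then 1 else 0) * pathWeight p v else 0 := by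
        simp_rw [measure_eq_tsum_paths hX, h.measure_path]
    _ = ∑' (y : E) (w : Fin (n + 1) → E), if w (Fin.last n) = z then
          (if y = x then 1 else 0) * (ENNReal.ofReal (p y (w 0)) * pathWeight p w) else 0 := by
        rw [← (Fin.consEquiv fun _ => E).tsum_eq, ENNReal.tsum_prod']
        refine tsum_congr fun y => tsum_congr fun w => ?_
        simp [Fin.consEquiv, pathWeight_cons, ← Fin.succ_last]
    _ = ∑' w : Fin (n + 1) → E,
          if w (Fin.last n) = z then ENNReal.ofReal (p x (w 0)) * pathWeight p w else 0 := by
        rw [tsum_eq_single x fun y hy => by simp [hy]]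
        simp
    _ = ∑' (w : Fin (n + 1) → E) (y : E), ENNReal.ofReal (p x y) *
          if w (Fin.last n) = z then (if w 0 = y then 1 else 0) * pathWeight p w else 0 := by
        refine tsum_congr fun w => ?_
        rw [tsum_eq_single (w 0) fun y hy => by simp [Ne.symm hy]]
        simp
    _ = ∑' y, ENNReal.ofReal (p x y) * ℙ y {ω | X n ω = z} := by
        rw [ENNReal.tsum_comm]
        simp_rw [ENNReal.tsum_mul_left, measure_eq_tsum_paths hX, h.measure_path]

theorem HasPathLaw.toReal_measure_succ [∀ x, IsFiniteMeasure (ℙ x)] (h : HasPathLaw X ℙ p)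
    (hX : ∀ n, Measurable (X n)) {x : E} (hp0 : ∀ y, 0 ≤ p x y) {S : Finset E}
    (hS : ∀ y ∉ S, p x y = 0) (z : E) (n : ℕ) :
    (ℙ x {ω | X (n + 1) ω = z}).toReal = ∑ y ∈ S, p x y * (ℙ y {ω | X n ω = z}).toReal := by
  rw [h.measure_succ hX, tsum_eq_sum (s := S) fun y hy => by simp [hS y hy],
    ENNReal.toReal_sum fun y _ => ENNReal.mul_ne_top ENNReal.ofReal_ne_top (measure_ne_top _ _)]
  simp [ENNReal.toReal_ofReal (hp0 _)]

end

open Finset in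
theorem sum_mul_eq_of_first_step {ι : Type*} {S : Finset ι} {w : ι → ℝ} (hw : ∑ y ∈ S, w y = 1)
    {a v : ℕ → ℝ} {u : ι → ℕ → ℝ} {φ : ι → ℝ} {c : ℝ}
    (hv0 : v 0 = 0) (hstep : ∀ k, v (k + 1) = ∑ y ∈ S, w y * u y k)
    (hv : Tendsto v atTop (𝓝 0))
    (hu : ∀ y ∈ S, Tendsto (fun N => ∑ k ∈ range (N + 1), (a k - u y k)) atTop (𝓝 (φ y)))
    (hc : Tendsto (fun N => ∑ k ∈ range (N + 1), (a k - v k)) atTop (𝓝 c)) :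
    ∑ y ∈ S, w y * φ y = c := by
  have hpartial : ∀ N, ∑ y ∈ S, w y * ∑ k ∈ range (N + 1), (a k - u y k)
      = ∑ k ∈ range (N + 1), (a k - v k) - v (N + 1) := by
    intro N
    simp_rw [mul_sum, mul_sub]
    rw [sum_comm]
    simp_rw [sum_sub_distrib, ← sum_mul, hw, one_mul, ← hstep]
    have := sum_range_succ' v (N + 1)
    have := sum_range_succ v (N + 1)
    linarith
  refine tendsto_nhds_unique (tendsto_finsetSum S fun y hy => (hu y hy).const_mul (w y)) ?_
  simp_rw [hpartial]
  simpa using hc.sub (hv.comp (tendsto_add_atTop_nat 1))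

theorem stmt17_general
    {E : Type*} [Countable E] [DecidableEq E] [MeasurableSpace E]
    [MeasurableSingletonClass E]
    {Ω : Type*} [MeasurableSpace Ω]
    (X : ℕ → Ω → E) (hXmeas : ∀ n, Measurable (X n))
    (ℙ : E → Measure Ω) (hprob : ∀ x, IsProbabilityMeasure (ℙ x))
    (p : E → E → ℝ) (hp0 : ∀ y z, 0 ≤ p y z) (hp1 : ∀ y, ∑' z, p y z = 1)
    -- locally finite transitions
    (hfin : ∀ y, {z | p y z ≠ 0}.Finite)
    -- the canonical Markov chain property: finite dimensional distributions
    (hchain : ∀ (x : E) (n : ℕ) (s : ℕ → E),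
      (ℙ x) {ω | ∀ i ≤ n, X i ω = s i}
        = (if s 0 = x then 1 else 0) *
            ∏ i ∈ Finset.range n, ENNReal.ofReal (p (s i) (s (i + 1))))
    (x₀ : E) (φ : E → ℝ)
    (hvanish : ∀ x : E,
      Tendsto (fun k => ((ℙ x) {ω | X k ω = x₀}).toReal) atTop (𝓝 0))
    (hconv : ∀ x : E,
      Tendsto
        (fun N => ∑ k ∈ Finset.range (N + 1),
          (((ℙ x₀) {ω | X k ω = x₀}).toReal - ((ℙ x) {ω | X k ω = x₀}).toReal))
        atTop (𝓝 (φ x))) :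
    φ x₀ = 0 ∧ ∀ x : E, x ≠ x₀ → ∑' y, p x y * φ y = φ x := by
  refine ⟨tendsto_nhds_unique (hconv x₀) (by simp), fun x hx => ?_⟩
  have hS : ∀ y ∉ (hfin x).toFinset, p x y = 0 := fun y hy => by simpa using hy
  rw [tsum_eq_sum fun y hy => by simp [hS y hy]]
  refine sum_mul_eq_of_first_step (by rw [← hp1 x, tsum_eq_sum hS]) ?_
    (HasPathLaw.toReal_measure_succ hchain hXmeas (hp0 x) hS x₀) (hvanish x)
    (fun y _ => hconv y) (hconv x)
  simp [HasPathLaw.measure_zero_of_ne hchain (Ne.symm hx)]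

/-- **Proposition 4.3.1 (second condition).** Let `E` be countable with an irreducible
recurrent Markov chain with locally finite transitions, `x₀ ∈ E`, and suppose
`φ : E → ℝ` satisfies: `ℙ_x(X_k = x₀) → 0` for every `x`, and
`Σ_{k=0}^N [ℙ_{x₀}(X_k = x₀) − ℙ_x(X_k = x₀)] → φ(x)`.  Then `φ(x₀) = 0` and `φ` is
harmonic at every `x ≠ x₀`. -/
theorem stmt17
    {E : Type*} [Countable E] [DecidableEq E] [MeasurableSpace E]
    [MeasurableSingletonClass E]
    {Ω : Type*} [MeasurableSpace Ω]
    (X : ℕ → Ω → E) (hXmeas : ∀ n, Measurable (X n))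
    (ℙ : E → Measure Ω) (hprob : ∀ x, IsProbabilityMeasure (ℙ x))
    (p : E → E → ℝ) (hp0 : ∀ y z, 0 ≤ p y z) (hp1 : ∀ y, ∑' z, p y z = 1)
    -- locally finite transitions
    (hfin : ∀ y, {z | p y z ≠ 0}.Finite)
    -- the canonical Markov chain property: finite dimensional distributions
    (hchain : ∀ (x : E) (n : ℕ) (s : ℕ → E),
      (ℙ x) {ω | ∀ i ≤ n, X i ω = s i}
        = (if s 0 = x then 1 else 0) *
            ∏ i ∈ Finset.range n, ENNReal.ofReal (p (s i) (s (i + 1))))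
    -- irreducibility
    (hirr : ∀ x y : E, ∃ n : ℕ, 0 < (ℙ x) {ω | X n ω = y})
    -- recurrence
    (hrec : ∀ x y : E, ∀ᵐ ω ∂(ℙ x), ∃ n : ℕ, 0 < n ∧ X n ω = y)
    (x₀ : E) (φ : E → ℝ)
    (hvanish : ∀ x : E,
      Tendsto (fun k => ((ℙ x) {ω | X k ω = x₀}).toReal) atTop (𝓝 0))
    (hconv : ∀ x : E,
      Tendsto
        (fun N => ∑ k ∈ Finset.range (N + 1),
          (((ℙ x₀) {ω | X k ω = x₀}).toReal - ((ℙ x) {ω | X k ω = x₀}).toReal))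
        atTop (𝓝 (φ x))) :
    φ x₀ = 0 ∧ ∀ x : E, x ≠ x₀ → ∑' y, p x y * φ y = φ x :=
  stmt17_general X hXmeas ℙ hprob p hp0 hp1 hfin hchain x₀ φ hvanish hconv
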